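/- (Moreau decomposition) Let G be a real Hilbert space, g ∈ Γ₀(G), γ > 0, and v ∈ G. Let p be the unique minimizer of u ↦ γ g*(u) + (1/2)‖u − v‖² and let q be the unique minimizer of y ↦ γ⁻¹ g(y) + (1/2)‖y − γ⁻¹v‖². Then p = v − γ q; that is, prox_{γ g*} v = v − γ prox_{γ⁻¹ g}(γ⁻¹ v). -/

import Mathlib

open scoped RealInnerProductSpace

/-- `f` is a proper, convex, lower semicontinuous function with values in `(-∞, +∞]`. -/
def IsProperConvexLsc {H : Type*} [NormedAddCommGroup H] [NormedSpace ℝ H]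
    (f : H → EReal) : Prop :=
  (∀ x, f x ≠ ⊥) ∧ (∃ x, f x ≠ ⊤) ∧
  (∀ x y : H, ∀ a b : ℝ, 0 ≤ a → 0 ≤ b → a + b = 1 →
      f (a • x + b • y) ≤ (a : EReal) * f x + (b : EReal) * f y) ∧
  LowerSemicontinuous f

/-- The Fenchel conjugate `g* : u ↦ sup_y (⟪y, u⟫ - g y)`. -/
noncomputable def fenchel {G : Type*} [NormedAddCommGroup G] [InnerProductSpace ℝ G]
    (g : G → EReal) (u : G) : EReal :=
  ⨆ y : G, ((⟪y, u⟫ : ℝ) : EReal) - g y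

/-!
The optimality condition for `q` says that `v - γ • q` is a subgradient of `g` at `q`, so the
Fenchel–Young inequality `g* u ≥ ⟪q, u⟫ - g q` is an equality at `u = v - γ • q`. Hence the
objective `γ g* + ½‖· - v‖²` minimised by `p` dominates the quadratic
`u ↦ γ (⟪q, u⟫ - g q) + ½‖u - v‖²` and agrees with it at that quadratic's unique minimiser
`v - γ • q`, which forces `p = v - γ • q`.
-/

open Filter Set Topology

theorem nonneg_of_forall_add_mul_nonneg {A B : ℝ} (h : ∀ t ∈ Ioc (0 : ℝ) 1, 0 ≤ A + t * B) :
    0 ≤ A := by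
  have hlim : Tendsto (fun t : ℝ => A + t * B) (𝓝[>] 0) (𝓝 A) :=
    tendsto_nhdsWithin_of_tendsto_nhds <| by
      simpa using (show Continuous fun t : ℝ => A + t * B by fun_prop).tendsto 0
  exact ge_of_tendsto hlim (eventually_of_mem (Ioc_mem_nhdsGT one_pos) h)

theorem eq_sub_of_inner_add_half_norm_sq_le {G : Type*} [NormedAddCommGroup G]
    [InnerProductSpace ℝ G] {a u v : G}
    (h : ⟪a, u⟫ + 1 / 2 * ‖u - v‖ ^ 2 ≤ ⟪a, v - a⟫ + 1 / 2 * ‖v - a - v‖ ^ 2) :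
    u = v - a := by
  obtain ⟨d, rfl⟩ : ∃ d, u = v - a + d := ⟨u - (v - a), by abel⟩
  have hsplit : ⟪a, v - a + d⟫ + 1 / 2 * ‖v - a + d - v‖ ^ 2
      = ⟪a, v - a⟫ + 1 / 2 * ‖v - a - v‖ ^ 2 + 1 / 2 * ‖d‖ ^ 2 := by
    rw [show v - a + d - v = d - a by abel, show v - a - v = -a by abel, norm_neg,
      norm_sub_sq_real, inner_add_right, real_inner_comm a d]
    ring
  have hd : ‖d‖ ^ 2 ≤ 0 := by linarith
  simpa using le_antisymm hd (sq_nonneg _)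

section Prox

def IsConvexEReal {E : Type*} [AddCommGroup E] [Module ℝ E] (f : E → EReal) : Prop :=
  ∀ x y : E, ∀ a b : ℝ, 0 ≤ a → 0 ≤ b → a + b = 1 →
    f (a • x + b • y) ≤ (a : EReal) * f x + (b : EReal) * f y

variable {G : Type*} [NormedAddCommGroup G]

def IsProxPoint (f : G → EReal) (c : ℝ) (w q : G) : Prop :=
  ∀ y, (c : EReal) * f q + ((1 / 2 * ‖q - w‖ ^ 2 : ℝ) : EReal)
    ≤ (c : EReal) * f y + ((1 / 2 * ‖y - w‖ ^ 2 : ℝ) : EReal)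

variable {f : G → EReal} {c : ℝ} {w q : G}

theorem IsProxPoint.ne_top (hq : IsProxPoint f c w q) (hc : 0 < c) {y : G} (hy : f y ≠ ⊤) :
    f q ≠ ⊤ := by
  intro htop
  have h := hq y
  rw [htop, EReal.coe_mul_top_of_pos hc, EReal.top_add_coe, top_le_iff] at h
  have hcy : (c : EReal) * f y ≠ ⊤ := (EReal.mul_ne_top _ _).2
    ⟨.inl (EReal.coe_ne_bot _), .inl (EReal.coe_nonneg.2 hc.le), .inl (EReal.coe_ne_top _), .inr hy⟩
  exact (EReal.add_lt_top hcy (EReal.coe_ne_top _)).ne h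

variable [InnerProductSpace ℝ G]

theorem IsProxPoint.inner_sub_le (hq : IsProxPoint f c w q) (hf : IsConvexEReal f) (hc : 0 < c)
    {r : ℝ} (hr : f q = r) {y : G} {s : ℝ} (hs : f y = s) :
    ⟪w - q, y - q⟫ ≤ c * (s - r) := by
  suffices key : 0 ≤ c * (s - r) + ⟪q - w, y - q⟫ by
    rw [← neg_sub q w, inner_neg_left]; linarith
  -- compare `q` with the points `(1 - t) • q + t • y` of the segment, divide by `t`, let `t → 0`
  refine nonneg_of_forall_add_mul_nonneg (B := 1 / 2 * ‖y - q‖ ^ 2) fun t ⟨ht0, ht1⟩ => ?_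
  have hconv : f ((1 - t) • q + t • y) ≤ (((1 - t) * r + t * s : ℝ) : EReal) := by
    simpa [hr, hs] using hf q y (1 - t) t (by linarith) ht0.le (by ring)
  have hmin : c * r + 1 / 2 * ‖q - w‖ ^ 2
      ≤ c * ((1 - t) * r + t * s) + 1 / 2 * ‖(1 - t) • q + t • y - w‖ ^ 2 := by
    have h := (hq _).trans (add_le_add_left (mul_le_mul_of_nonneg_left hconv
      (EReal.coe_nonneg.mpr hc.le)) _)
    rw [hr] at h
    exact_mod_cast h
  have hz : (1 - t) • q + t • y - w = (q - w) + t • (y - q) := by module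
  rw [hz, norm_add_sq_real, real_inner_smul_right, norm_smul, Real.norm_of_nonneg ht0.le] at hmin
  have : 0 ≤ t * (c * (s - r) + ⟪q - w, y - q⟫ + t * (1 / 2 * ‖y - q‖ ^ 2)) := by nlinarith
  exact nonneg_of_mul_nonneg_right this ht0

theorem IsProxPoint.add_inner_le (hq : IsProxPoint f c w q) (hf : IsConvexEReal f) (hc : 0 < c)
    {r : ℝ} (hr : f q = r) (y : G) : ((r + ⟪c⁻¹ • (w - q), y - q⟫ : ℝ) : EReal) ≤ f y := by
  induction hy : f y with
  | bot =>
    have h := hq y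
    rw [hr, hy, EReal.mul_bot_of_pos (EReal.coe_pos.2 hc), EReal.bot_add, le_bot_iff] at h
    exact absurd h (EReal.coe_ne_bot _)
  | top => exact le_top
  | coe s =>
    rw [real_inner_smul_left, EReal.coe_le_coe_iff, ← le_sub_iff_add_le', inv_mul_le_iff₀ hc]
    exact hq.inner_sub_le hf hc hr hy

end Prox

section Fenchel

variable {G : Type*} [NormedAddCommGroup G] [InnerProductSpace ℝ G]

theorem inner_sub_le_fenchel (f : G → EReal) (y u : G) :
    ((⟪y, u⟫ : ℝ) : EReal) - f y ≤ fenchel f u :=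
  le_iSup (fun y => ((⟪y, u⟫ : ℝ) : EReal) - f y) y

theorem fenchel_eq_of_forall_le {f : G → EReal} {u q : G} {r : ℝ} (hr : f q = r)
    (hu : ∀ y, ((r + ⟪u, y - q⟫ : ℝ) : EReal) ≤ f y) :
    fenchel f u = ((⟪q, u⟫ - r : ℝ) : EReal) := by
  refine le_antisymm (iSup_le fun y => (EReal.sub_le_sub le_rfl (hu y)).trans_eq ?_) ?_
  · rw [← EReal.coe_sub, inner_sub_right, real_inner_comm y, real_inner_comm q]
    congr 1
    ring
  · simpa [hr] using inner_sub_le_fenchel f q u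

end Fenchel

theorem moreau_decomposition_general
    {G : Type*} [NormedAddCommGroup G] [InnerProductSpace ℝ G]
    (g : G → EReal) (hg : IsProperConvexLsc g)
    (γ : ℝ) (hγ : 0 < γ) (v p q : G)
    (hp : ∀ u : G,
      ((γ : ℝ) : EReal) * fenchel g p + (((1 / 2) * ‖p - v‖ ^ 2 : ℝ) : EReal)
        ≤ ((γ : ℝ) : EReal) * fenchel g u + (((1 / 2) * ‖u - v‖ ^ 2 : ℝ) : EReal))
    (hq : ∀ y : G,
      ((γ⁻¹ : ℝ) : EReal) * g q + (((1 / 2) * ‖q - γ⁻¹ • v‖ ^ 2 : ℝ) : EReal)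
        ≤ ((γ⁻¹ : ℝ) : EReal) * g y + (((1 / 2) * ‖y - γ⁻¹ • v‖ ^ 2 : ℝ) : EReal)) :
    p = v - γ • q := by
  obtain ⟨hbot, ⟨y₀, hy₀⟩, hconv, -⟩ := hg
  have hq' : IsProxPoint g γ⁻¹ (γ⁻¹ • v) q := hq
  obtain ⟨r, hr⟩ : ∃ r : ℝ, g q = r :=
    ⟨_, (EReal.coe_toReal (hq'.ne_top (inv_pos.2 hγ) hy₀) (hbot q)).symm⟩
  have hsub : ∀ y, ((r + ⟪v - γ • q, y - q⟫ : ℝ) : EReal) ≤ g y := by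
    simpa [smul_sub, hγ.ne'] using hq'.add_inner_le hconv (inv_pos.2 hγ) hr
  have hlow : ((⟪q, p⟫ - r : ℝ) : EReal) ≤ fenchel g p := by
    simpa [hr] using inner_sub_le_fenchel g q p
  have hmin : γ * (⟪q, p⟫ - r) + 1 / 2 * ‖p - v‖ ^ 2
      ≤ γ * (⟪q, v - γ • q⟫ - r) + 1 / 2 * ‖v - γ • q - v‖ ^ 2 := by
    have h := hp (v - γ • q)
    rw [fenchel_eq_of_forall_le hr hsub] at h
    have hγlow := mul_le_mul_of_nonneg_left hlow (EReal.coe_nonneg.2 hγ.le)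
    exact_mod_cast (add_le_add_left hγlow _).trans h
  refine eq_sub_of_inner_add_half_norm_sq_le ?_
  rw [real_inner_smul_left, real_inner_smul_left]
  linarith

/-- Moreau decomposition: if `p = prox_{γ g*} v` and
`q = prox_{γ⁻¹ g}(γ⁻¹ v)`, then `p = v - γ q`. -/
theorem moreau_decomposition
    {G : Type*} [NormedAddCommGroup G] [InnerProductSpace ℝ G] [CompleteSpace G]
    (g : G → EReal) (hg : IsProperConvexLsc g)
    (γ : ℝ) (hγ : 0 < γ) (v p q : G)
    (hp : ∀ u : G,
      ((γ : ℝ) : EReal) * fenchel g p + (((1 / 2) * ‖p - v‖ ^ 2 : ℝ) : EReal)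
        ≤ ((γ : ℝ) : EReal) * fenchel g u + (((1 / 2) * ‖u - v‖ ^ 2 : ℝ) : EReal))
    (hq : ∀ y : G,
      ((γ⁻¹ : ℝ) : EReal) * g q + (((1 / 2) * ‖q - γ⁻¹ • v‖ ^ 2 : ℝ) : EReal)
        ≤ ((γ⁻¹ : ℝ) : EReal) * g y + (((1 / 2) * ‖y - γ⁻¹ • v‖ ^ 2 : ℝ) : EReal)) :
    p = v - γ • q :=
  moreau_decomposition_general g hg γ hγ v p q hp hq
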